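/- In the formal power series ring ℤ[[t, z_1, …, z_r]], writing z^α = z_1^{m_1}⋯z_r^{m_r} for α = m_1α_1 + ⋯ + m_rα_r in the positive root lattice of A_r, one has ∏_{1≤i≤k≤r} (1 − t·z^{β_{i,k}})·(1 − z^{β_{i,k}})^{-1} = Σ_{T ∈ 𝒯(∞)} (1 − t)^{seg(T)} · z^{−wt(T)}, where the right-hand side is a well-defined formal power series because for each monomial only finitely many T ∈ 𝒯(∞) contribute. -/

import Mathlib

open MvPowerSeries

/-- The variable `t` in `ℤ[[t, z_1, …, z_r]]`. -/
noncomputable def tvar (r : ℕ) : MvPowerSeries (Option (Fin r)) ℤ :=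
  MvPowerSeries.X none

/-- The monomial `z^v = z_1^{v 1} ⋯ z_r^{v r}` in `ℤ[[t, z_1, …, z_r]]`. -/
noncomputable def zmon (r : ℕ) (v : Fin r → ℕ) : MvPowerSeries (Option (Fin r)) ℤ :=
  MvPowerSeries.monomial (Finsupp.equivFunOnFinite.symm fun o => Option.elim o 0 v) 1

/-- Marginally large semistandard Young tableaux of type `A_r`, on the alphabet
`{1 < 2 < ⋯ < r+1}`: exactly `r` rows (given as lists of entries), rows weakly
increasing, columns strictly increasing, first column `1, 2, …, r`, and the
number of `i`-entries in row `i` exceeds the number of boxes in row `i+1` by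
exactly one. -/
structure TabA (r : ℕ) where
  row : Fin r → List ℕ
  entry_mem : ∀ i : Fin r, ∀ e ∈ row i, 1 ≤ e ∧ e ≤ r + 1
  row_weak : ∀ i : Fin r, (row i).Chain' (· ≤ ·)
  first_col : ∀ i : Fin r, (row i).head? = some (i.1 + 1)
  col_le : ∀ i : Fin r, ∀ h : i.1 + 1 < r,
    (row ⟨i.1 + 1, h⟩).length ≤ (row i).length
  col_strict : ∀ i : Fin r, ∀ h : i.1 + 1 < r, ∀ j < (row ⟨i.1 + 1, h⟩).length,
    (row i).getD j 0 < (row ⟨i.1 + 1, h⟩).getD j 0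
  marg_large : ∀ i : Fin r, (row i).count (i.1 + 1) =
    (if h : i.1 + 1 < r then (row ⟨i.1 + 1, h⟩).length else 0) + 1

/-- `ℓ_{i,k}(T)`: the number of `k`-entries in row `i` (rows of `T` are indexed by
`Fin r`, row `i : Fin r` having label `i+1`). -/
def ellA (r : ℕ) (T : TabA r) (i : Fin r) (k : ℕ) : ℕ := (T.row i).count k

/-- `seg(T)`: the number of pairs `(i,k)` with `1 ≤ i < k ≤ r+1` and `ℓ_{i,k}(T) > 0`. -/
def segA (r : ℕ) (T : TabA r) : ℕ :=
  ∑ i : Fin r, ((Finset.Icc (i.1 + 2) (r + 1)).filter fun k => ellA r T i k ≠ 0).card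

/-- The positive root `β_{i,k} = α_i + ⋯ + α_k` of `A_r`, as a vector of
coordinates in the simple roots. -/
def betaA (r : ℕ) (i k : ℕ) : Fin r → ℕ :=
  fun j => if i ≤ j.1 + 1 ∧ j.1 + 1 ≤ k then 1 else 0

/-- The set of positive roots `{β_{i,k} : 1 ≤ i ≤ k ≤ r}` of `A_r`. -/
def posRootsA (r : ℕ) : Finset (Fin r → ℕ) :=
  ((Finset.Icc 1 r ×ˢ Finset.Icc 1 r).filter fun p => p.1 ≤ p.2).image
    fun p => betaA r p.1 p.2

/-- `Ξ(T)`, extended by zero to all vectors: `Ξ(T)(β_{i,k}) = ℓ_{i,k+1}(T)`. -/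
def XiA (r : ℕ) (T : TabA r) (v : Fin r → ℕ) : ℕ :=
  ∑ i : Fin r, ∑ k ∈ Finset.Icc (i.1 + 1) r,
    if v = betaA r (i.1 + 1) k then ellA r T i (k + 1) else 0

/-- `-wt(T) = Σ_{1≤i<k≤r+1} ℓ_{i,k}(T)·(α_i + ⋯ + α_{k-1})`, in simple-root
coordinates. -/
def negwtA (r : ℕ) (T : TabA r) : Fin r → ℕ :=
  ∑ i : Fin r, ∑ k ∈ Finset.Icc (i.1 + 2) (r + 1),
    ellA r T i k • betaA r (i.1 + 1) (k - 1)

/-- `wt(T)` as an integer vector in simple-root coordinates. -/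
def wtA (r : ℕ) (T : TabA r) : Fin r → ℤ :=
  fun j => -(negwtA r T j : ℤ)

/-
Each factor of the Gindikin–Karpelevich product expands as
`(1 - t z^β) / (1 - z^β) = 1 + (1 - t) Σ_{n ≥ 1} z^{n β}`, so the product is the sum, over all
multiplicity functions `π` on the positive roots, of `(1 - t)^{#supp π} z^{Σ π(β) β}`.
A marginally large tableau is determined by the multiplicities `ℓ_{i,k}(T)` for `k ≥ i + 2`, and
these can be prescribed freely: the number of `(i+1)`s in row `i` is then forced by marginal
largeness, going up from the last row. Under `T ↦ π` with `π(β_{i,k-1}) = ℓ_{i,k}(T)`, `seg` and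
`-wt` become `#supp π` and `Σ π(β) β`. For a fixed exponent only `π` bounded by its degree
contribute, so both sides reduce to the same finite sum once each factor is truncated.
-/

open Finset

namespace MvPowerSeries

variable {σ R : Type*} [DecidableEq σ] [CommSemiring R] {n : σ →₀ ℕ}

theorem trunc'_mul_congr {f f' g g' : MvPowerSeries σ R}
    (hf : trunc' R n f = trunc' R n f') (hg : trunc' R n g = trunc' R n g') :
    trunc' R n (f * g) = trunc' R n (f' * g') := by
  ext m
  rw [coeff_trunc', coeff_trunc']
  split_ifs with hm
  · rw [← coeff_trunc'_mul_trunc'_eq_coeff_mul n f g hm, hf, hg,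
      coeff_trunc'_mul_trunc'_eq_coeff_mul n f' g' hm]
  · rfl

theorem trunc'_prod_congr {ι : Type*} (s : Finset ι) {f g : ι → MvPowerSeries σ R}
    (h : ∀ i ∈ s, trunc' R n (f i) = trunc' R n (g i)) :
    trunc' R n (∏ i ∈ s, f i) = trunc' R n (∏ i ∈ s, g i) := by
  induction s using Finset.cons_induction with
  | empty => rfl
  | cons a s ha ih =>
    rw [prod_cons, prod_cons]
    exact trunc'_mul_congr (h a (mem_cons_self a s)) (ih fun i hi => h i (mem_cons_of_mem hi))

theorem coeff_eq_coeff_of_trunc'_eq {f g : MvPowerSeries σ R} (h : trunc' R n f = trunc' R n g) :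
    coeff n f = coeff n g := by
  simpa [coeff_trunc'] using congrArg (MvPolynomial.coeff n) h

end MvPowerSeries

open MvPowerSeries

theorem mul_eq_geom_sum_add {A : Type*} [CommRing A] {t x y : A} (hy : (1 - x) * y = 1) (N : ℕ) :
    (1 - t * x) * y =
      ∑ n ∈ range (N + 1), (1 - t) ^ (if n ≠ 0 then 1 else 0) * x ^ n
        + (1 - t) * y * x ^ (N + 1) := by
  have hgeom := geom_sum_mul x N
  have hsum : ∑ n ∈ range (N + 1), (1 - t) ^ (if n ≠ 0 then 1 else 0) * x ^ n
      = 1 + (1 - t) * x * ∑ n ∈ range N, x ^ n := by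
    rw [sum_range_succ', mul_sum, add_comm]
    simp [pow_succ', mul_assoc]
  rw [hsum]
  linear_combination (1 + (1 - t) * x * ∑ n ∈ range N, x ^ n) * hy + (1 - t) * x * y * hgeom

/-- The exponent of `z^v`; the variable `t` is `none`. -/
noncomputable def zexp (r : ℕ) : (Fin r → ℕ) →+ (Option (Fin r) →₀ ℕ) where
  toFun v := Finsupp.equivFunOnFinite.symm fun o => Option.elim o 0 v
  map_zero' := by ext o; cases o <;> rfl
  map_add' v w := by ext o; cases o <;> rfl

section Monomials

variable {r : ℕ}

theorem zmon_eq_monomial (v : Fin r → ℕ) : zmon r v = monomial (zexp r v) 1 := rfl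

theorem zmon_nsmul (n : ℕ) (v : Fin r → ℕ) : zmon r (n • v) = zmon r v ^ n := by
  rw [zmon_eq_monomial, zmon_eq_monomial, monomial_pow, map_nsmul, one_pow]

theorem prod_zmon {ι : Type*} (s : Finset ι) (w : ι → Fin r → ℕ) :
    ∏ p ∈ s, zmon r (w p) = zmon r (∑ p ∈ s, w p) := by
  simp only [zmon_eq_monomial, prod_monomial, map_sum, prod_const_one]

theorem coeff_mul_zmon_eq_zero {e : Option (Fin r) →₀ ℕ} {w : Fin r → ℕ} {j : Fin r}
    (h : e (some j) < w j) (φ : MvPowerSeries (Option (Fin r)) ℤ) :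
    coeff e (φ * zmon r w) = 0 := by
  rw [mul_comm, zmon_eq_monomial, coeff_monomial_mul, if_neg]
  exact fun hle => (hle (some j)).not_gt h

theorem one_sub_zmon_mul_invOfUnit {v : Fin r → ℕ} {j : Fin r} (hj : v j ≠ 0) :
    (1 - zmon r v) * invOfUnit (1 - zmon r v) 1 = 1 := by
  refine mul_invOfUnit _ _ ?_
  have hv : zexp r v ≠ 0 := fun h => hj (DFunLike.congr_fun h (some j))
  rw [map_sub, map_one, zmon_eq_monomial, ← coeff_zero_eq_constantCoeff_apply, coeff_monomial,
    if_neg hv.symm, sub_zero, Units.val_one]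

/-- The remainder after `N` terms is a multiple of `z^{(N+1) v}`, whose `z_j`-degree exceeds `N`. -/
theorem trunc'_gkFactor {v : Fin r → ℕ} {j : Fin r} (hj : v j ≠ 0)
    {e : Option (Fin r) →₀ ℕ} {N : ℕ} (he : e (some j) ≤ N) :
    trunc' ℤ e ((1 - tvar r * zmon r v) * invOfUnit (1 - zmon r v) 1)
      = trunc' ℤ e (∑ n ∈ range (N + 1),
          (1 - tvar r) ^ (if n ≠ 0 then 1 else 0) * zmon r (n • v)) := by
  rw [mul_eq_geom_sum_add (one_sub_zmon_mul_invOfUnit hj) N, map_add, add_eq_left.mpr]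
  · simp only [zmon_nsmul]
  ext m
  rw [coeff_trunc', ← zmon_nsmul]
  split_ifs with hm
  · refine coeff_mul_zmon_eq_zero (j := j) ?_ _
    calc m (some j) ≤ N := (hm (some j)).trans he
      _ < (N + 1) * v j :=
        (Nat.lt_succ_self N).trans_le (Nat.le_mul_of_pos_right _ (Nat.pos_of_ne_zero hj))
  · rfl

end Monomials

section Roots

variable {r : ℕ}

/-- Pairs `(i, k)` of a row `i` (label `i + 1`) and an entry `k ∈ [i + 2, r + 1]`; the pair
`(i, k)` stands for the positive root `β_{i+1, k-1}`, whose multiplicity is `ℓ_{i+1,k}`. -/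
def rootIndex (r : ℕ) : Finset ((_ : Fin r) × ℕ) :=
  univ.sigma fun i => Icc (i.1 + 2) (r + 1)

def rootOf (r : ℕ) (p : (_ : Fin r) × ℕ) : Fin r → ℕ := betaA r (p.1.1 + 1) (p.2 - 1)

theorem mem_rootIndex {p : (_ : Fin r) × ℕ} :
    p ∈ rootIndex r ↔ p.1.1 + 2 ≤ p.2 ∧ p.2 ≤ r + 1 := by
  simp [rootIndex]

theorem rootOf_apply (p : (_ : Fin r) × ℕ) (j : Fin r) :
    rootOf r p j = if p.1.1 ≤ j.1 ∧ j.1 + 2 ≤ p.2 then 1 else 0 := by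
  simp only [rootOf, betaA]
  exact if_congr (by omega) rfl rfl

theorem rootOf_self {p : (_ : Fin r) × ℕ} (hp : p ∈ rootIndex r) : rootOf r p p.1 = 1 := by
  rw [mem_rootIndex] at hp
  rw [rootOf_apply, if_pos ⟨le_rfl, hp.1⟩]

theorem le_of_rootOf_eq {p q : (_ : Fin r) × ℕ} (hp : p ∈ rootIndex r)
    (h : rootOf r p = rootOf r q) : q.1.1 ≤ p.1.1 ∧ p.2 ≤ q.2 := by
  rw [mem_rootIndex] at hp
  have hfirst := congrFun h p.1
  have hlast := congrFun h ⟨p.2 - 2, by omega⟩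
  simp only [rootOf_apply] at hfirst hlast
  split_ifs at hfirst hlast <;> omega

theorem rootOf_injOn : Set.InjOn (rootOf r) (rootIndex r) := by
  intro p hp q hq h
  obtain ⟨hqp, hpq⟩ := le_of_rootOf_eq hp h
  obtain ⟨hpq', hqp'⟩ := le_of_rootOf_eq hq h.symm
  obtain ⟨i, k⟩ := p
  obtain ⟨i', k'⟩ := q
  obtain rfl : i = i' := Fin.ext (le_antisymm hpq' hqp)
  obtain rfl : k = k' := le_antisymm hpq hqp'
  rfl

theorem posRootsA_eq_image : posRootsA r = (rootIndex r).image (rootOf r) := by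
  ext v
  simp only [posRootsA, mem_image, mem_filter, mem_product, mem_Icc, mem_rootIndex]
  constructor
  · rintro ⟨⟨i, k⟩, ⟨⟨⟨hi, -⟩, -, hk⟩, hik⟩, rfl⟩
    refine ⟨⟨⟨i - 1, by omega⟩, k + 1⟩, ⟨?_, ?_⟩, ?_⟩ <;> dsimp only
    · omega
    · omega
    simp only [rootOf, Nat.sub_add_cancel hi, Nat.add_sub_cancel]
  · rintro ⟨p, hp, rfl⟩
    refine ⟨⟨p.1.1 + 1, p.2 - 1⟩, ⟨⟨⟨?_, ?_⟩, ?_, ?_⟩, ?_⟩, rfl⟩ <;> dsimp only <;> omega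

end Roots

namespace TabA

variable {r : ℕ}

theorem ext_row {T T' : TabA r} (h : T.row = T'.row) : T = T' := by
  cases T; cases T'; cases h; rfl

theorem pairwise_row (T : TabA r) (i : Fin r) : (T.row i).Pairwise (· ≤ ·) :=
  List.isChain_iff_pairwise.mp (T.row_weak i)

theorem le_of_mem_row (T : TabA r) (i : Fin r) {x : ℕ} (hx : x ∈ T.row i) : i.1 + 1 ≤ x := by
  obtain ⟨tl, htl⟩ := List.head?_eq_some_iff.mp (T.first_col i)
  have hs := T.pairwise_row i
  rw [htl] at hs hx
  rcases List.mem_cons.mp hx with rfl | hx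
  · exact le_rfl
  · exact List.rel_of_pairwise_cons hs hx

theorem count_row (T : TabA r) (i : Fin r) (a : ℕ) :
    (T.row i).count a =
      if a = i.1 + 1 then (if h : i.1 + 1 < r then (T.row ⟨i.1 + 1, h⟩).length else 0) + 1
      else if i.1 + 2 ≤ a ∧ a ≤ r + 1 then ellA r T i a else 0 := by
  by_cases h₁ : a = i.1 + 1
  · subst h₁
    rw [if_pos rfl]
    exact T.marg_large i
  rw [if_neg h₁]
  split_ifs
  · rfl
  · refine List.count_eq_zero.mpr fun ha => ?_
    have := T.le_of_mem_row i ha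
    have := (T.entry_mem i a ha).2
    omega

end TabA

section Construction

variable (r : ℕ) (c : ℕ → ℕ → ℕ)

def rowTail (i : ℕ) : Multiset ℕ := ∑ k ∈ Icc (i + 2) (r + 1), Multiset.replicate (c i k) k

/-- The length of row `i` of the tableau built from the multiplicities `c`: each row `j ≥ i`
contributes its tail and one extra `(j+1)`, by marginal largeness. -/
def rowLen (i : ℕ) : ℕ := ∑ j ∈ Ico i r, ((rowTail r c j).card + 1)

def mkRow (i : ℕ) : List ℕ :=
  List.replicate (rowLen r c (i + 1) + 1) (i + 1) ++ (rowTail r c i).sort (· ≤ ·)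

variable {r c}

theorem rowLen_eq_zero {i : ℕ} (hi : r ≤ i) : rowLen r c i = 0 := by
  rw [rowLen, Ico_eq_empty_of_le hi, sum_empty]

theorem rowLen_eq {i : ℕ} (hi : i < r) :
    rowLen r c i = rowLen r c (i + 1) + 1 + (rowTail r c i).card := by
  rw [rowLen, sum_eq_sum_Ico_succ_bot hi, ← rowLen]
  ring

theorem mem_rowTail {i a : ℕ} (ha : a ∈ rowTail r c i) : i + 2 ≤ a ∧ a ≤ r + 1 := by
  obtain ⟨k, hk, ha⟩ := Multiset.mem_sum.mp ha
  rw [Multiset.eq_of_mem_replicate ha]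
  exact mem_Icc.mp hk

theorem count_rowTail (i a : ℕ) :
    (rowTail r c i).count a = if i + 2 ≤ a ∧ a ≤ r + 1 then c i a else 0 := by
  simp only [rowTail, Multiset.count_sum', Multiset.count_replicate, sum_ite_eq', mem_Icc]

theorem count_mkRow (i a : ℕ) :
    (mkRow r c i).count a =
      if a = i + 1 then rowLen r c (i + 1) + 1
      else if i + 2 ≤ a ∧ a ≤ r + 1 then c i a else 0 := by
  rw [mkRow, List.count_append, List.count_replicate, ← Multiset.coe_count, Multiset.sort_eq,
    count_rowTail]
  split_ifs <;> simp_all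

theorem length_mkRow {i : ℕ} (hi : i < r) : (mkRow r c i).length = rowLen r c i := by
  rw [mkRow, List.length_append, List.length_replicate, Multiset.length_sort, rowLen_eq hi]

theorem mem_mkRow {i x : ℕ} (hi : i < r) (hx : x ∈ mkRow r c i) :
    i + 1 ≤ x ∧ x ≤ r + 1 := by
  rcases List.mem_append.mp hx with hx | hx
  · rw [List.eq_of_mem_replicate hx]
    omega
  · have := mem_rowTail ((Multiset.mem_sort _).mp hx)
    omega

theorem pairwise_mkRow (i : ℕ) : (mkRow r c i).Pairwise (· ≤ ·) := by
  refine List.pairwise_append.mpr ⟨List.pairwise_replicate.mpr (Or.inr le_rfl),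
    Multiset.pairwise_sort _ _, fun x hx y hy => ?_⟩
  rw [List.eq_of_mem_replicate hx]
  have := mem_rowTail ((Multiset.mem_sort _).mp hy)
  omega

theorem getD_mkRow {i j : ℕ} (hj : j < rowLen r c (i + 1) + 1) :
    (mkRow r c i).getD j 0 = i + 1 := by
  simp [mkRow, List.getD_eq_getElem?_getD, List.getElem?_append_left, hj]

variable (r c)

def mkTab : TabA r where
  row i := mkRow r c i.1
  entry_mem i _ he := by
    have := mem_mkRow i.2 he
    omega
  row_weak i := List.isChain_iff_pairwise.mpr (pairwise_mkRow i.1)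
  first_col i := by simp [mkRow, List.replicate_succ]
  col_le i h := by
    show (mkRow r c (i.1 + 1)).length ≤ (mkRow r c i.1).length
    rw [length_mkRow h, length_mkRow i.2, rowLen_eq i.2]
    omega
  col_strict i h j hj := by
    show (mkRow r c i.1).getD j 0 < (mkRow r c (i.1 + 1)).getD j 0
    rw [length_mkRow h] at hj
    rw [getD_mkRow (by omega)]
    have hmem : (mkRow r c (i.1 + 1)).getD j 0 ∈ mkRow r c (i.1 + 1) := by
      rw [List.getD_eq_getElem _ _ (by rwa [length_mkRow h])]
      exact List.getElem_mem _
    exact (mem_mkRow h hmem).1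
  marg_large i := by
    show (mkRow r c i.1).count (i.1 + 1) = _
    rw [count_mkRow, if_pos rfl]
    split_ifs with h
    · rw [length_mkRow h]
    · rw [rowLen_eq_zero (by omega)]

variable {r c}

theorem ellA_mkTab {i : Fin r} {k : ℕ} (hk : i.1 + 2 ≤ k) (hkr : k ≤ r + 1) :
    ellA r (mkTab r c) i k = c i.1 k := by
  show (mkRow r c i.1).count k = _
  rw [count_mkRow, if_neg (by omega), if_pos ⟨hk, hkr⟩]

theorem mkRow_eq_row (T : TabA r)
    (hc : ∀ (i : Fin r) (k : ℕ), i.1 + 2 ≤ k → k ≤ r + 1 → c i.1 k = ellA r T i k)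
    (i : ℕ) (hi : i < r) : mkRow r c i = T.row ⟨i, hi⟩ := by
  have hlen : rowLen r c (i + 1) =
      if h : i + 1 < r then (T.row ⟨i + 1, h⟩).length else 0 := by
    split_ifs with h
    · rw [← mkRow_eq_row T hc (i + 1) h, length_mkRow h]
    · exact rowLen_eq_zero (by omega)
  refine List.Perm.eq_of_pairwise' (pairwise_mkRow i) (T.pairwise_row _)
    (List.perm_iff_count.mpr fun a => ?_)
  rw [count_mkRow, T.count_row, hlen]
  split_ifs with _ _ hk <;> first | rfl | exact hc ⟨i, hi⟩ a hk.1 hk.2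
termination_by r - i

theorem mkTab_eq (T : TabA r)
    (hc : ∀ (i : Fin r) (k : ℕ), i.1 + 2 ≤ k → k ≤ r + 1 → c i.1 k = ellA r T i k) :
    mkTab r c = T :=
  TabA.ext_row (funext fun i => mkRow_eq_row T hc i.1 i.2)

end Construction

section Assembly

variable {r : ℕ}

def multOf (π : rootIndex r → ℕ) (i k : ℕ) : ℕ :=
  if h : i < r ∧ i + 2 ≤ k ∧ k ≤ r + 1 then π ⟨⟨⟨i, h.1⟩, k⟩, mem_rootIndex.mpr h.2⟩
  else 0

variable (r) in
noncomputable def tabEquiv : TabA r ≃ (rootIndex r → ℕ) where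
  toFun T p := ellA r T p.1.1 p.1.2
  invFun π := mkTab r (multOf π)
  left_inv T := mkTab_eq T fun i k hk hkr => by rw [multOf, dif_pos ⟨i.2, hk, hkr⟩]
  right_inv π := by
    funext ⟨⟨i, k⟩, hp⟩
    have hik := mem_rootIndex.mp hp
    simp only [ellA_mkTab hik.1 hik.2, multOf, dif_pos (show i.1 < r ∧ _ from ⟨i.2, hik⟩)]

noncomputable def gkTerm (π : rootIndex r → ℕ) : MvPowerSeries (Option (Fin r)) ℤ :=
  (1 - tvar r) ^ #{p | π p ≠ 0} * zmon r (∑ p, π p • rootOf r p)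

theorem gkTerm_tabEquiv (T : TabA r) :
    gkTerm (tabEquiv r T) = (1 - tvar r) ^ segA r T * zmon r (negwtA r T) := by
  have hseg : #{p : rootIndex r | ellA r T p.1.1 p.1.2 ≠ 0} = segA r T := by
    rw [card_filter, sum_coe_sort (rootIndex r) fun p => if ellA r T p.1 p.2 ≠ 0 then 1 else 0,
      rootIndex, sum_sigma]
    simp only [segA, card_filter]
  have hwt : ∑ p : rootIndex r, ellA r T p.1.1 p.1.2 • rootOf r p = negwtA r T := by
    rw [sum_coe_sort (rootIndex r) fun p => ellA r T p.1 p.2 • rootOf r p, rootIndex, sum_sigma]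
    rfl
  rw [gkTerm, ← hseg, ← hwt]
  rfl

theorem coeff_gkTerm_eq_zero {e : Option (Fin r) →₀ ℕ} {π : rootIndex r → ℕ}
    {p : rootIndex r} (hp : e.degree < π p) : coeff e (gkTerm π) = 0 := by
  refine coeff_mul_zmon_eq_zero (j := p.1.1) ?_ _
  calc e (some p.1.1) ≤ e.degree := Finsupp.le_degree _ e
    _ < π p * rootOf r p p.1.1 := by rwa [rootOf_self p.2, mul_one]
    _ ≤ ∑ q, π q * rootOf r q p.1.1 :=
      single_le_sum (f := fun q => π q * rootOf r q p.1.1) (fun _ _ => Nat.zero_le _) (mem_univ p)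
    _ = (∑ q, π q • rootOf r q) p.1.1 := by
      simp only [Finset.sum_apply, Pi.smul_apply, smul_eq_mul]

theorem prod_gkFactor_terms_eq_gkTerm (π : rootIndex r → ℕ) :
    ∏ p, (1 - tvar r) ^ (if π p ≠ 0 then 1 else 0) * zmon r (π p • rootOf r p)
      = gkTerm π := by
  rw [prod_mul_distrib, prod_pow_eq_pow_sum, ← card_filter, prod_zmon, gkTerm]

theorem coeff_prod_gkFactor (e : Option (Fin r) →₀ ℕ) :
    coeff e (∏ p : rootIndex r,
        (1 - tvar r * zmon r (rootOf r p)) * invOfUnit (1 - zmon r (rootOf r p)) 1)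
      = ∑ π ∈ Fintype.piFinset fun _ => range (e.degree + 1), coeff e (gkTerm π) := by
  have htrunc := trunc'_prod_congr (n := e) univ fun (p : rootIndex r) _ =>
    trunc'_gkFactor ((rootOf_self p.2).trans_ne one_ne_zero) (Finsupp.le_degree _ e)
  rw [coeff_eq_coeff_of_trunc'_eq htrunc, prod_univ_sum, map_sum]
  simp only [prod_gkFactor_terms_eq_gkTerm]

theorem tsum_coeff_gkTerm (e : Option (Fin r) →₀ ℕ) :
    ∑' π, coeff e (gkTerm π)
      = ∑ π ∈ Fintype.piFinset fun _ => range (e.degree + 1), coeff e (gkTerm (r := r) π) :=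
  tsum_eq_sum fun π hπ => by
    obtain ⟨p, hp⟩ : ∃ p, e.degree < π p := by simpa [Fintype.mem_piFinset] using hπ
    exact coeff_gkTerm_eq_zero hp

end Assembly

theorem stmt2_general (r : ℕ) :
    ∀ e : Option (Fin r) →₀ ℕ,
      MvPowerSeries.coeff (R := ℤ) e
        (∏ v ∈ posRootsA r, (1 - tvar r * zmon r v) *
          MvPowerSeries.invOfUnit (1 - zmon r v) 1)
      = ∑' T : TabA r,
          MvPowerSeries.coeff (R := ℤ) e
            ((1 - tvar r) ^ segA r T * zmon r (negwtA r T)) := by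
  intro e
  rw [posRootsA_eq_image, prod_image rootOf_injOn, ← prod_coe_sort, coeff_prod_gkFactor,
    ← tsum_coeff_gkTerm, ← (tabEquiv r).tsum_eq]
  simp only [gkTerm_tabEquiv]

/-- the Gindikin–Karpelevich formula as a sum over the marginally
large tableaux `𝒯(∞)` of type `A_r`, stated coefficientwise in
`ℤ[[t, z_1, …, z_r]]`. -/
theorem stmt2 (r : ℕ) (hr : 1 ≤ r) :
    ∀ e : Option (Fin r) →₀ ℕ,
      MvPowerSeries.coeff (R := ℤ) e
        (∏ v ∈ posRootsA r, (1 - tvar r * zmon r v) *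
          MvPowerSeries.invOfUnit (1 - zmon r v) 1)
      = ∑' T : TabA r,
          MvPowerSeries.coeff (R := ℤ) e
            ((1 - tvar r) ^ segA r T * zmon r (negwtA r T)) :=
  stmt2_general r
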